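/- arXiv:1201.2331 — 9 statements merged into one kernel-verified Lean document; each statement's English description precedes it below -/
import Mathlib

section
/- A bounded lattice is representable as a ring of sets (there is a bounded lattice embedding into some powerset lattice) if and only if it is distributive. -/
section Defs
variable {L : Type} [Lattice L] [BoundedOrder L] {X : Type}

/-- A representation: a bounded lattice embedding into a powerset. -/
def IsRep (h : L → Set X) : Prop :=
  Function.Injective h ∧ (∀ a b : L, h (a ⊓ b) = h a ∩ h b) ∧
    (∀ a b : L, h (a ⊔ b) = h a ∪ h b) ∧ h ⊥ = ∅ ∧ h ⊤ = Set.univ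

/-- Meet-complete: existing infima are sent to intersections. -/
def MeetComplete (h : L → Set X) : Prop :=
  ∀ (S : Set L) (x : L), IsGLB S x → h x = ⋂ a ∈ S, h a

/-- Join-complete: existing suprema are sent to unions. -/
def JoinComplete (h : L → Set X) : Prop :=
  ∀ (S : Set L) (x : L), IsLUB S x → h x = ⋃ a ∈ S, h a

def IsFilter' (F : Set L) : Prop :=
  ⊤ ∈ F ∧ (∀ a b : L, a ∈ F → a ≤ b → b ∈ F) ∧ (∀ a b : L, a ∈ F → b ∈ F → a ⊓ b ∈ F)

def IsPrimeFilter (F : Set L) : Prop :=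
  IsFilter' F ∧ ⊥ ∉ F ∧ ∀ a b : L, a ⊔ b ∈ F → a ∈ F ∨ b ∈ F

/-- Complete filter: contains all existing infima of its subsets. -/
def CompleteFilter (F : Set L) : Prop :=
  ∀ S ⊆ F, ∀ x : L, IsGLB S x → x ∈ F

/-- Completely prime filter: if an existing supremum lies in F then some element does. -/
def CompletelyPrimeFilter (F : Set L) : Prop :=
  ∀ (S : Set L) (x : L), IsLUB S x → x ∈ F → ∃ s ∈ S, s ∈ F

/-- Complete ideal: contains all existing suprema of its subsets. -/
def CompleteIdeal (I : Set L) : Prop :=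
  ∀ S ⊆ I, ∀ x : L, IsLUB S x → x ∈ I

/-- Completely prime ideal: if an existing infimum lies in I then some element does. -/
def CompletelyPrimeIdeal (I : Set L) : Prop :=
  ∀ (S : Set L) (x : L), IsGLB S x → x ∈ I → ∃ s ∈ S, s ∈ I

/-- A distinguishing family of subsets of L. -/
def Distinguishing (K : Set (Set L)) : Prop :=
  ∀ a b : L, a ≠ b → ∃ s ∈ K, (a ∈ s ∧ b ∉ s) ∨ (b ∈ s ∧ a ∉ s)

/-- Ultrafilter: a maximal proper filter. -/
def IsUltrafilter (F : Set L) : Prop :=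
  IsFilter' F ∧ ⊥ ∉ F ∧ ∀ G : Set L, IsFilter' G → ⊥ ∉ G → F ⊆ G → F = G

end Defs

theorem stmt1 (L : Type) [Lattice L] [BoundedOrder L] :
    (∃ (X : Type) (h : L → Set X), IsRep h) ↔
      ∀ a b c : L, a ⊓ (b ⊔ c) = (a ⊓ b) ⊔ (a ⊓ c) := by
  constructor
  · rintro ⟨X, h, hinj, hinf, hsup, -, -⟩ a b c
    apply hinj
    simp only [hinf, hsup, Set.inter_union_distrib_left]
  · intro hd
    letI : DistribLattice L :=
      { (inferInstance : Lattice L) with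
        le_sup_inf := by
          intro x y z
          rw [hd]
          apply sup_le
          · exact le_sup_of_le_left inf_le_right
          · rw [inf_comm, hd]
            apply sup_le
            · exact le_sup_of_le_left inf_le_right
            · exact le_sup_of_le_right (inf_comm z y).le }
    -- key separation lemma
    have key : ∀ a b : L, ¬ a ≤ b → ∃ J : Order.Ideal L, J.IsPrime ∧ a ∉ J ∧ b ∈ J := by
      intro a b hab
      have hdisj : Disjoint ((Order.PFilter.principal a : Order.PFilter L) : Set L)
          ((Order.Ideal.principal b : Order.Ideal L) : Set L) := by
        rw [Set.disjoint_left]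
        intro x hx hx'
        exact hab (le_trans hx hx')
      obtain ⟨J, hJp, hIJ, hFJ⟩ :=
        DistribLattice.prime_ideal_of_disjoint_filter_ideal hdisj
      refine ⟨J, hJp, ?_, hIJ (le_refl b)⟩
      intro haJ
      exact Set.disjoint_left.mp hFJ (le_refl a) haJ
    refine ⟨{J : Order.Ideal L // J.IsPrime}, fun a => {J | a ∉ J.1}, ?_, ?_, ?_, ?_, ?_⟩
    · intro a b hab
      by_contra hne
      rcases (not_and_or.mp fun h : a ≤ b ∧ b ≤ a => hne (le_antisymm h.1 h.2)) with h | h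
      · obtain ⟨J, hJp, ha, hb⟩ := key a b h
        have hab' : {J : {J : Order.Ideal L // J.IsPrime} | a ∉ J.1}
            = {J : {J : Order.Ideal L // J.IsPrime} | b ∉ J.1} := hab
        have : (⟨J, hJp⟩ : {J : Order.Ideal L // J.IsPrime}) ∈ {J : {J : Order.Ideal L // J.IsPrime} | a ∉ J.1} := ha
        rw [hab'] at this
        exact this hb
      · obtain ⟨J, hJp, hb, ha⟩ := key b a h
        have hab' : {J : {J : Order.Ideal L // J.IsPrime} | a ∉ J.1}
            = {J : {J : Order.Ideal L // J.IsPrime} | b ∉ J.1} := hab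
        have : (⟨J, hJp⟩ : {J : Order.Ideal L // J.IsPrime}) ∈ {J : {J : Order.Ideal L // J.IsPrime} | b ∉ J.1} := hb
        rw [← hab'] at this
        exact this ha
    · intro a b
      ext J
      simp only [Set.mem_setOf_eq, Set.mem_inter_iff]
      constructor
      · intro h
        constructor
        · exact fun ha => h (J.1.lower inf_le_left ha)
        · exact fun hb => h (J.1.lower inf_le_right hb)
      · rintro ⟨ha, hb⟩ hab
        rcases J.2.mem_or_mem hab with h | h
        · exact ha h
        · exact hb h
    · intro a b
      ext J
      simp only [Set.mem_setOf_eq, Set.mem_union]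
      constructor
      · intro h
        by_contra hc
        push_neg at hc
        exact h (J.1.sup_mem hc.1 hc.2)
      · rintro (h | h) hab
        · exact h (J.1.lower le_sup_left hab)
        · exact h (J.1.lower le_sup_right hab)
    · ext J
      simp only [Set.mem_setOf_eq, Set.mem_empty_iff_false, iff_false, not_not]
      exact J.1.bot_mem
    · ext J
      simp only [Set.mem_setOf_eq, Set.mem_univ, iff_true]
      exact J.2.toIsProper.top_notMem
end

section
/- A bounded distributive lattice L has a meet-complete representation if and only if L has a distinguishing set of complete prime filters. -/
theorem stmt5 (L : Type) [DistribLattice L] [BoundedOrder L] :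
    (∃ (X : Type) (h : L → Set X), IsRep h ∧ MeetComplete h) ↔
      ∃ K : Set (Set L), (∀ F ∈ K, IsPrimeFilter F ∧ CompleteFilter F) ∧ Distinguishing K := by
  constructor
  · rintro ⟨X, h, ⟨hinj, hmeet, hjoin, hbot, htop⟩, hmc⟩
    refine ⟨{F | ∃ x : X, F = {a : L | x ∈ h a}}, ?_, ?_⟩
    · rintro F ⟨x, rfl⟩
      refine ⟨⟨⟨?_, ?_, ?_⟩, ?_, ?_⟩, ?_⟩
      · show x ∈ h ⊤; rw [htop]; trivial
      · intro a b ha hab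
        have : a ⊓ b = a := inf_eq_left.mpr hab
        have hx : x ∈ h (a ⊓ b) := by rw [this]; exact ha
        rw [hmeet] at hx; exact hx.2
      · intro a b ha hb
        show x ∈ h (a ⊓ b); rw [hmeet]; exact ⟨ha, hb⟩
      · show x ∉ h ⊥; rw [hbot]; exact fun c => c
      · intro a b hab
        have hx : x ∈ h (a ⊔ b) := hab
        rw [hjoin] at hx; exact hx
      · intro S hS m hm
        show x ∈ h m
        rw [hmc S m hm]
        exact Set.mem_iInter₂.mpr fun a ha => hS ha
    · intro a b hab
      have hne : h a ≠ h b := fun e => hab (hinj e)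
      have hne' : ¬ ∀ x, x ∈ h a ↔ x ∈ h b := fun e => hne (Set.ext e)
      push_neg at hne'
      obtain ⟨x, hx⟩ := hne'
      refine ⟨{c : L | x ∈ h c}, ⟨x, rfl⟩, ?_⟩
      rcases hx with ⟨h1, h2⟩ | ⟨h1, h2⟩
      · exact Or.inl ⟨h1, h2⟩
      · exact Or.inr ⟨h2, h1⟩
  · rintro ⟨K, hK, hdist⟩
    refine ⟨{F : Set L // F ∈ K}, fun a => {F | a ∈ F.1}, ⟨?_, ?_, ?_, ?_, ?_⟩, ?_⟩
    · intro a b hab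
      by_contra hne
      obtain ⟨s, hs, hsd⟩ := hdist a b hne
      have := Set.ext_iff.mp hab ⟨s, hs⟩
      rcases hsd with ⟨h1, h2⟩ | ⟨h1, h2⟩
      · exact h2 (this.mp h1)
      · exact h2 (this.mpr h1)
    · intro a b
      ext F
      obtain ⟨⟨⟨_, hup, hinf⟩, _, _⟩, _⟩ := hK F.1 F.2
      exact ⟨fun hm => ⟨hup _ _ hm inf_le_left, hup _ _ hm inf_le_right⟩,
        fun ⟨ha, hb⟩ => hinf _ _ ha hb⟩
    · intro a b
      ext F
      obtain ⟨⟨⟨_, hup, _⟩, _, hpr⟩, _⟩ := hK F.1 F.2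
      exact ⟨fun hm => hpr _ _ hm,
        fun hm => hm.elim (fun ha => hup _ _ ha le_sup_left) (fun hb => hup _ _ hb le_sup_right)⟩
    · ext F
      obtain ⟨⟨_, hb, _⟩, _⟩ := hK F.1 F.2
      simp only [Set.mem_setOf_eq, Set.mem_empty_iff_false, iff_false]
      exact hb
    · ext F
      obtain ⟨⟨⟨ht, _, _⟩, _, _⟩, _⟩ := hK F.1 F.2
      simp only [Set.mem_setOf_eq, Set.mem_univ, iff_true]
      exact ht
    · intro S m hm
      ext F
      obtain ⟨⟨⟨_, hup, _⟩, _, _⟩, hcf⟩ := hK F.1 F.2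
      simp only [Set.mem_setOf_eq, Set.mem_iInter]
      exact ⟨fun hmem a ha => hup _ _ hmem (hm.1 ha),
        fun hall => hcf S (fun a ha => hall a ha) m hm⟩
end

section
/- A bounded distributive lattice L has a join-complete representation if and only if L has a distinguishing set of completely prime filters. -/
theorem stmt6 (L : Type) [DistribLattice L] [BoundedOrder L] :
    (∃ (X : Type) (h : L → Set X), IsRep h ∧ JoinComplete h) ↔
      ∃ K : Set (Set L), (∀ F ∈ K, IsPrimeFilter F ∧ CompletelyPrimeFilter F) ∧
        Distinguishing K := by
  constructor
  · rintro ⟨X, h, ⟨hinj, hmeet, hjoin, hbot, htop⟩, hjc⟩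
    refine ⟨{F | ∃ x : X, F = {a : L | x ∈ h a}}, ?_, ?_⟩
    · rintro F ⟨x, rfl⟩
      refine ⟨⟨⟨?_, ?_, ?_⟩, ?_, ?_⟩, ?_⟩
      · simp [htop]
      · intro a b ha hab
        have : a ⊓ b = a := inf_eq_left.mpr hab
        have := hmeet a b
        rw [this] at *
        simp only [Set.mem_setOf_eq] at *
        have : x ∈ h a ∩ h b := by rw [← hmeet, inf_eq_left.mpr hab]; exact ha
        exact this.2
      · intro a b ha hb
        simp only [Set.mem_setOf_eq, hmeet] at *
        exact ⟨ha, hb⟩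
      · simp [hbot]
      · intro a b hab
        simp only [Set.mem_setOf_eq, hjoin] at *
        exact hab
      · intro S y hS hy
        simp only [Set.mem_setOf_eq] at hy
        rw [hjc S y hS] at hy
        simpa using hy
    · intro a b hab
      have : h a ≠ h b := fun e => hab (hinj e)
      rcases Set.ext_iff.not.mp this with h'
      push_neg at h'
      obtain ⟨x, hx⟩ := h'
      refine ⟨{c : L | x ∈ h c}, ⟨x, rfl⟩, ?_⟩
      rcases hx with ⟨h1, h2⟩ | ⟨h1, h2⟩
      · exact Or.inl ⟨h1, h2⟩
      · exact Or.inr ⟨h2, h1⟩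
  · rintro ⟨K, hK, hdist⟩
    refine ⟨{F // F ∈ K}, fun a => {F | a ∈ F.1}, ⟨?_, ?_, ?_, ?_, ?_⟩, ?_⟩
    · intro a b hab
      by_contra hne
      obtain ⟨F, hF, hcase⟩ := hdist a b hne
      simp only at hab
      rcases hcase with ⟨haF, hbF⟩ | ⟨hbF, haF⟩
      · have : (⟨F, hF⟩ : {F // F ∈ K}) ∈ {F : {F // F ∈ K} | a ∈ F.1} := haF
        rw [hab] at this; exact hbF this
      · have : (⟨F, hF⟩ : {F // F ∈ K}) ∈ {F : {F // F ∈ K} | b ∈ F.1} := hbF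
        rw [← hab] at this; exact haF this
    · intro a b
      ext F
      obtain ⟨⟨⟨htop, hup, hmeet⟩, hbot, hprime⟩, hcp⟩ := hK F.1 F.2
      simp only [Set.mem_setOf_eq, Set.mem_inter_iff]
      exact ⟨fun hm => ⟨hup _ _ hm inf_le_left, hup _ _ hm inf_le_right⟩,
        fun ⟨ha, hb⟩ => hmeet _ _ ha hb⟩
    · intro a b
      ext F
      obtain ⟨⟨⟨htop, hup, hmeet⟩, hbot, hprime⟩, hcp⟩ := hK F.1 F.2
      simp only [Set.mem_setOf_eq, Set.mem_union]
      exact ⟨hprime a b, fun h => h.elim (fun ha => hup _ _ ha le_sup_left)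
        (fun hb => hup _ _ hb le_sup_right)⟩
    · ext F
      obtain ⟨⟨_, hbot, _⟩, _⟩ := hK F.1 F.2
      simp [hbot]
    · ext F
      obtain ⟨⟨⟨htop, _, _⟩, _⟩, _⟩ := hK F.1 F.2
      simp [htop]
    · intro S y hS
      ext F
      obtain ⟨⟨⟨htop, hup, hmeet⟩, hbot, hprime⟩, hcp⟩ := hK F.1 F.2
      simp only [Set.mem_setOf_eq, Set.mem_iUnion]
      constructor
      · intro hy
        obtain ⟨s, hsS, hsF⟩ := hcp S y hS hy
        exact ⟨s, hsS, hsF⟩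
      · rintro ⟨s, hsS, hsF⟩
        exact hup _ _ hsF (hS.1 hsS)
end

section
/- A bounded distributive lattice L has a complete representation (preserving all existing infima as intersections and all existing suprema as unions) if and only if L has a distinguishing set of complete, completely prime filters. -/
theorem stmt7 (L : Type) [DistribLattice L] [BoundedOrder L] :
    (∃ (X : Type) (h : L → Set X), IsRep h ∧ MeetComplete h ∧ JoinComplete h) ↔
      ∃ K : Set (Set L),
        (∀ F ∈ K, IsPrimeFilter F ∧ CompleteFilter F ∧ CompletelyPrimeFilter F) ∧
          Distinguishing K := by
  constructor
  · rintro ⟨X, h, ⟨hinj, hmeet, hjoin, hbot, htop⟩, hmc, hjc⟩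
    refine ⟨{F | ∃ x : X, F = {a : L | x ∈ h a}}, ?_, ?_⟩
    · rintro F ⟨x, rfl⟩
      refine ⟨⟨⟨?_, ?_, ?_⟩, ?_, ?_⟩, ?_, ?_⟩
      · show x ∈ h ⊤; rw [htop]; trivial
      · intro a b ha hab
        have : a ⊓ b = a := inf_eq_left.mpr hab
        have hx : x ∈ h (a ⊓ b) := by rw [this]; exact ha
        rw [hmeet] at hx
        exact hx.2
      · intro a b ha hb
        show x ∈ h (a ⊓ b); rw [hmeet]; exact ⟨ha, hb⟩
      · show x ∉ h ⊥; rw [hbot]; exact fun h => h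
      · intro a b hab
        have : x ∈ h (a ⊔ b) := hab
        rw [hjoin] at this
        exact this
      · intro S hS y hy
        show x ∈ h y
        rw [hmc S y hy]
        exact Set.mem_iInter₂.mpr fun a ha => hS ha
      · intro S y hy hxy
        have : x ∈ h y := hxy
        rw [hjc S y hy] at this
        obtain ⟨a, ha, hxa⟩ := Set.mem_iUnion₂.mp this
        exact ⟨a, ha, hxa⟩
    · intro a b hab
      have : h a ≠ h b := fun e => hab (hinj e)
      have : ¬ (h a ⊆ h b ∧ h b ⊆ h a) := by
        intro ⟨h1, h2⟩; exact this (Set.Subset.antisymm h1 h2)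
      rcases not_and_or.mp this with h1 | h2
      · obtain ⟨x, hx1, hx2⟩ := Set.not_subset.mp h1
        exact ⟨{a | x ∈ h a}, ⟨x, rfl⟩, Or.inl ⟨hx1, hx2⟩⟩
      · obtain ⟨x, hx1, hx2⟩ := Set.not_subset.mp h2
        exact ⟨{a | x ∈ h a}, ⟨x, rfl⟩, Or.inr ⟨hx1, hx2⟩⟩
  · rintro ⟨K, hK, hdist⟩
    refine ⟨{F // F ∈ K}, fun a => {F | a ∈ F.1}, ⟨?_, ?_, ?_, ?_, ?_⟩, ?_, ?_⟩
    · intro a b hab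
      by_contra hne
      obtain ⟨F, hF, hc⟩ := hdist a b hne
      have := Set.ext_iff.mp hab ⟨F, hF⟩
      rcases hc with ⟨h1, h2⟩ | ⟨h1, h2⟩
      · exact h2 (this.mp h1)
      · exact h2 (this.mpr h1)
    · intro a b
      ext ⟨F, hF⟩
      obtain ⟨⟨⟨-, hup, hmeet⟩, -, -⟩, -, -⟩ := hK F hF
      constructor
      · intro hx
        exact ⟨hup _ _ hx inf_le_left, hup _ _ hx inf_le_right⟩
      · rintro ⟨h1, h2⟩; exact hmeet _ _ h1 h2
    · intro a b
      ext ⟨F, hF⟩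
      obtain ⟨⟨⟨-, hup, -⟩, -, hprime⟩, -, -⟩ := hK F hF
      constructor
      · intro hx; exact hprime _ _ hx
      · rintro (h1 | h1)
        · exact hup _ _ h1 le_sup_left
        · exact hup _ _ h1 le_sup_right
    · ext ⟨F, hF⟩
      obtain ⟨⟨-, hbot, -⟩, -, -⟩ := hK F hF
      simp only [Set.mem_setOf_eq, Set.mem_empty_iff_false, iff_false]
      exact hbot
    · ext ⟨F, hF⟩
      obtain ⟨⟨⟨htop, -, -⟩, -, -⟩, -, -⟩ := hK F hF
      simp only [Set.mem_setOf_eq, Set.mem_univ, iff_true]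
      exact htop
    · intro S x hx
      ext ⟨F, hF⟩
      obtain ⟨⟨⟨-, hup, -⟩, -, -⟩, hcomp, -⟩ := hK F hF
      simp only [Set.mem_setOf_eq, Set.mem_iInter]
      constructor
      · intro hxF a ha
        exact hup _ _ hxF (hx.1 ha)
      · intro hall
        exact hcomp S (fun a ha => hall a ha) x hx
    · intro S x hx
      ext ⟨F, hF⟩
      obtain ⟨⟨⟨-, hup, -⟩, -, -⟩, -, hcp⟩ := hK F hF
      simp only [Set.mem_setOf_eq, Set.mem_iUnion]
      constructor
      · intro hxF
        obtain ⟨s, hs, hsF⟩ := hcp S x hx hxF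
        exact ⟨s, hs, hsF⟩
      · rintro ⟨s, hs, hsF⟩
        exact hup _ _ hsF (hx.1 hs)
end

section
/- A Boolean algebra is atomic if and only if it has a complete representation, i.e., a Boolean embedding into a powerset preserving all existing infima and suprema. -/
/-- A Boolean representation: additionally preserves complements. -/
def IsBoolRep {B X : Type} [BooleanAlgebra B] (h : B → Set X) : Prop :=
  IsRep h ∧ ∀ a : B, h aᶜ = (h a)ᶜ

section CompleteMaps

variable {L X : Type} [Lattice L] {h : L → Set X}

theorem IsRep.of_complete [BoundedOrder L] (hinj : Function.Injective h) (hmeet : MeetComplete h)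
    (hjoin : JoinComplete h) : IsRep h := by
  refine ⟨hinj, fun a b => ?_, fun a b => ?_, ?_, ?_⟩
  · simpa using hmeet _ _ isGLB_pair
  · simpa using hjoin _ _ isLUB_pair
  · simpa using hjoin _ _ isLUB_empty
  · simpa using hmeet _ _ isGLB_empty

theorem JoinComplete.completelyPrimeFilter_setOf_mem (hjoin : JoinComplete h) (x : X) :
    CompletelyPrimeFilter {c | x ∈ h c} := by
  intro S c hc hx
  have hx' : x ∈ ⋃ a ∈ S, h a := hjoin S c hc ▸ hx
  simpa using hx'

end CompleteMaps

section BooleanAlgebra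

variable {B : Type} [BooleanAlgebra B]

theorem IsAtom.le_compl_iff {p a : B} (hp : IsAtom p) : p ≤ aᶜ ↔ ¬p ≤ a := by
  rw [le_compl_iff_disjoint_right, hp.not_le_iff_disjoint]

theorem IsAtom.exists_le_of_le_of_isLUB {p x : B} {S : Set B} (hp : IsAtom p) (hS : IsLUB S x)
    (hpx : p ≤ x) : ∃ s ∈ S, p ≤ s := by
  by_contra! hnot
  have hxp : x ≤ pᶜ := hS.2 fun s hs => le_compl_comm.1 (hp.le_compl_iff.2 (hnot s hs))
  exact hp.le_compl_iff.1 (hpx.trans hxp) le_rfl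

theorem exists_disjoint_of_not_isAtom {d : B} (hd : d ≠ ⊥) (hnd : ¬IsAtom d) :
    ∃ e ≤ d, ∃ f ≤ d, e ≠ ⊥ ∧ f ≠ ⊥ ∧ Disjoint e f := by
  obtain ⟨e, hed, hne⟩ : ∃ e < d, e ≠ ⊥ := by
    simp only [IsAtom, not_and, not_forall, exists_prop] at hnd
    exact hnd hd
  exact ⟨e, hed.le, d \ e, sdiff_le, hne, by simpa [sdiff_eq_bot_iff] using hed.not_ge,
    disjoint_sdiff_self_right⟩

theorem exists_isAtom_le_of_completelyPrimeFilter {U : Set B} (hU : CompletelyPrimeFilter U)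
    (hdisj : ∀ e ∈ U, ∀ f ∈ U, ¬Disjoint e f) {b : B} (hb : b ∈ U) :
    ∃ a, IsAtom a ∧ a ≤ b := by
  by_contra! hno
  have hlub : IsLUB {c | c ≤ b ∧ c ∉ U} b := by
    refine ⟨fun c hc => hc.1, fun u hu => ?_⟩
    by_contra hbu
    have hd : b \ u ≠ ⊥ := mt sdiff_eq_bot_iff.1 hbu
    have hmem : ∀ c ≤ b \ u, c ≠ ⊥ → c ∈ U := fun c hc hc0 => by
      by_contra hcU
      have hcu : c ≤ u := hu ⟨hc.trans sdiff_le, hcU⟩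
      exact hc0 ((disjoint_sdiff_self_left.mono_left hc).eq_bot_of_le hcu)
    obtain ⟨e, he, f, hf, he0, hf0, hef⟩ :=
      exists_disjoint_of_not_isAtom hd fun hat => hno _ hat sdiff_le
    exact hdisj e (hmem e he he0) f (hmem f hf hf0) hef
  obtain ⟨c, ⟨-, hcU⟩, hc⟩ := hU _ b hlub hb
  exact hcU hc

def atomRep (B : Type) [BooleanAlgebra B] (b : B) : Set {a : B // IsAtom a} :=
  {p | (p : B) ≤ b}

theorem atomRep_injective [IsAtomic B] : Function.Injective (atomRep B) := fun _ _ hab =>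
  BooleanAlgebra.eq_iff_atom_le_iff.2 fun p hp => Set.ext_iff.1 hab ⟨p, hp⟩

theorem atomRep_compl (a : B) : atomRep B aᶜ = (atomRep B a)ᶜ :=
  Set.ext fun p => p.2.le_compl_iff

theorem atomRep_meetComplete : MeetComplete (atomRep B) := fun S x hx => by
  ext p
  simp only [atomRep, Set.mem_iInter, Set.mem_ofPred_eq]
  exact ⟨fun hp _ ha => hp.trans (hx.1 ha), fun hp => hx.2 hp⟩

theorem atomRep_joinComplete : JoinComplete (atomRep B) := fun S x hx => by
  ext p
  simp only [atomRep, Set.mem_iUnion, Set.mem_ofPred_eq, exists_prop]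
  exact ⟨p.2.exists_le_of_le_of_isLUB hx, fun ⟨_, hs, hp⟩ => hp.trans (hx.1 hs)⟩

end BooleanAlgebra

theorem stmt11 (B : Type) [BooleanAlgebra B] :
    (∀ b : B, b ≠ ⊥ → ∃ a : B, IsAtom a ∧ a ≤ b) ↔
      ∃ (X : Type) (h : B → Set X), IsBoolRep h ∧ MeetComplete h ∧ JoinComplete h := by
  constructor
  · intro hat
    have : IsAtomic B := (isAtomic_iff B).2 fun b => or_iff_not_imp_left.2 (hat b)
    exact ⟨_, atomRep B,
      ⟨.of_complete atomRep_injective atomRep_meetComplete atomRep_joinComplete, atomRep_compl⟩,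
      atomRep_meetComplete, atomRep_joinComplete⟩
  · rintro ⟨X, h, ⟨⟨hinj, hinf, -, hbot, -⟩, -⟩, -, hjoin⟩ b hb
    obtain ⟨x, hx⟩ : (h b).Nonempty :=
      Set.nonempty_iff_ne_empty.2 fun hb' => hb (hinj (hb'.trans hbot.symm))
    refine exists_isAtom_le_of_completelyPrimeFilter
      (hjoin.completelyPrimeFilter_setOf_mem x) (fun e he f hf hef => ?_) hx
    have hx_bot : x ∈ h (e ⊓ f) := by rw [hinf]; exact ⟨he, hf⟩
    rw [hef.eq_bot, hbot] at hx_bot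
    exact hx_bot
end

section
/- A Boolean algebra has a meet-complete representation if and only if it has a join-complete representation. -/
section Aux
variable {B : Type} [BooleanAlgebra B] {X : Type}

lemma isGLB_compl_image {S : Set B} {x : B} (h : IsLUB S x) :
    IsGLB (compl '' S) xᶜ := by
  constructor
  · rintro _ ⟨a, ha, rfl⟩
    exact compl_le_compl (h.1 ha)
  · intro y hy
    rw [le_compl_iff_le_compl]
    exact h.2 fun a ha => le_compl_comm.mp (hy ⟨a, ha, rfl⟩)

lemma isLUB_compl_image {S : Set B} {x : B} (h : IsGLB S x) :
    IsLUB (compl '' S) xᶜ := by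
  constructor
  · rintro _ ⟨a, ha, rfl⟩
    exact compl_le_compl (h.1 ha)
  · intro y hy
    rw [compl_le_iff_compl_le]
    exact h.2 fun a ha => compl_le_iff_compl_le.mp (hy ⟨a, ha, rfl⟩)

lemma dualRep {h : B → Set X} (hr : IsRep h) :
    IsRep (fun a => (h aᶜ)ᶜ) := by
  obtain ⟨hinj, hinf, hsup, hbot, htop⟩ := hr
  refine ⟨fun a b hab => ?_, fun a b => ?_, fun a b => ?_, ?_, ?_⟩
  · have := compl_injective (hinj (compl_injective hab : h aᶜ = h bᶜ))
    exact this
  · simp only [compl_inf, hsup, Set.compl_union]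
  · simp only [compl_sup, hinf, Set.compl_inter]
  · simp [htop]
  · simp [hbot]

lemma dualJoin {h : B → Set X} (hm : MeetComplete h) :
    JoinComplete (fun a => (h aᶜ)ᶜ) := by
  intro S x hx
  have := hm (compl '' S) xᶜ (isGLB_compl_image hx)
  simp only [this, Set.biInter_image, Set.compl_iInter]

lemma dualMeet {h : B → Set X} (hm : JoinComplete h) :
    MeetComplete (fun a => (h aᶜ)ᶜ) := by
  intro S x hx
  have := hm (compl '' S) xᶜ (isLUB_compl_image hx)
  simp only [this, Set.biUnion_image, Set.compl_iUnion]

end Aux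

theorem stmt12 (B : Type) [BooleanAlgebra B] :
    (∃ (X : Type) (h : B → Set X), IsRep h ∧ MeetComplete h) ↔
      ∃ (X : Type) (h : B → Set X), IsRep h ∧ JoinComplete h := by
  constructor
  · rintro ⟨X, h, hr, hm⟩
    exact ⟨X, _, dualRep hr, dualJoin hm⟩
  · rintro ⟨X, h, hr, hm⟩
    exact ⟨X, _, dualRep hr, dualMeet hm⟩
end

section
/- If the set of join-irreducible elements of a bounded distributive lattice L is join-dense in L, then L has a meet-complete representation. -/
theorem stmt15 (L : Type) [DistribLattice L] [BoundedOrder L]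
    (hd : ∀ a : L,
      IsLUB {j : L | (j ≠ ⊥ ∧ ∀ x y : L, j = x ⊔ y → j = x ∨ j = y) ∧ j ≤ a} a) :
    ∃ (X : Type) (h : L → Set X), IsRep h ∧ MeetComplete h := by
  refine ⟨{j : L // j ≠ ⊥ ∧ ∀ x y : L, j = x ⊔ y → j = x ∨ j = y},
    fun a => {j | j.1 ≤ a}, ⟨?_, ?_, ?_, ?_, ?_⟩, ?_⟩
  · intro a b hab
    have key : {j : L | (j ≠ ⊥ ∧ ∀ x y : L, j = x ⊔ y → j = x ∨ j = y) ∧ j ≤ a}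
        = {j : L | (j ≠ ⊥ ∧ ∀ x y : L, j = x ⊔ y → j = x ∨ j = y) ∧ j ≤ b} := by
      ext j
      simp only [Set.mem_setOf_eq]
      constructor
      · rintro ⟨hj, hle⟩
        exact ⟨hj, by have := Set.ext_iff.mp hab ⟨j, hj⟩; exact this.mp hle⟩
      · rintro ⟨hj, hle⟩
        exact ⟨hj, by have := Set.ext_iff.mp hab ⟨j, hj⟩; exact this.mpr hle⟩
    exact (hd a).unique (key ▸ hd b)
  · intro a b
    ext j
    simp only [Set.mem_setOf_eq, Set.mem_inter_iff, le_inf_iff]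
  · intro a b
    ext ⟨j, hne, hirr⟩
    simp only [Set.mem_setOf_eq, Set.mem_union]
    constructor
    · intro hle
      have : j = (j ⊓ a) ⊔ (j ⊓ b) := by
        rw [← inf_sup_left, inf_eq_left.mpr hle]
      rcases hirr _ _ this with h | h
      · exact Or.inl (by rw [h]; exact inf_le_right)
      · exact Or.inr (by rw [h]; exact inf_le_right)
    · rintro (h | h)
      · exact h.trans le_sup_left
      · exact h.trans le_sup_right
  · ext ⟨j, hne, hirr⟩
    simp only [Set.mem_setOf_eq, Set.mem_empty_iff_false, iff_false]
    exact fun hle => hne (le_bot_iff.mp hle)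
  · ext j
    simp [Set.mem_setOf_eq, le_top]
  · intro S x hglb
    ext j
    simp only [Set.mem_setOf_eq, Set.mem_iInter]
    constructor
    · exact fun hle a ha => hle.trans (hglb.1 ha)
    · exact fun h => hglb.2 fun b hb => h b hb
end

section
/- The classes of bounded distributive lattices admitting a meet-complete representation is closed under arbitrary direct products: if each L_i has a meet-complete representation then so does ∏ L_i. -/
theorem stmt17 (ι : Type) (L : ι → Type) [∀ i, DistribLattice (L i)]
    [∀ i, BoundedOrder (L i)]
    (h : ∀ i, ∃ (X : Type) (f : L i → Set X), IsRep f ∧ MeetComplete f) :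
    ∃ (X : Type) (f : (∀ i, L i) → Set X), IsRep f ∧ MeetComplete f := by
  classical
  choose X f hrep hmc using h
  refine ⟨Σ i, X i, fun g => {p | p.2 ∈ f p.1 (g p.1)}, ⟨?_, ?_, ?_, ?_, ?_⟩, ?_⟩
  · intro g g' hgg'
    funext i
    apply (hrep i).1
    ext t
    have := Set.ext_iff.mp hgg' ⟨i, t⟩
    simpa using this
  · intro a b
    ext ⟨i, t⟩
    simp [(hrep i).2.1]
  · intro a b
    ext ⟨i, t⟩
    simp [(hrep i).2.2.1]
  · ext ⟨i, t⟩
    simp [(hrep i).2.2.2.1]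
  · ext ⟨i, t⟩
    simp [(hrep i).2.2.2.2]
  · intro S x hx
    ext ⟨i, t⟩
    have hglb : IsGLB ((fun a => a i) '' S) (x i) := by
      constructor
      · rintro b ⟨a, ha, rfl⟩
        exact hx.1 ha i
      · intro y hy
        set z : ∀ j, L j := Function.update x i (x i ⊔ y) with hz
        have hzl : z ∈ lowerBounds S := by
          intro a ha j
          by_cases hji : j = i
          · subst hji
            simp only [hz, Function.update_self]
            exact sup_le (hx.1 ha j) (hy ⟨a, ha, rfl⟩)
          · simp only [hz, Function.update_of_ne hji]
            exact hx.1 ha j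
        have := hx.2 hzl i
        simp only [hz, Function.update_self] at this
        exact le_sup_right.trans this
    have := hmc i ((fun a => a i) '' S) (x i) hglb
    simp only [Set.mem_setOf_eq, this, Set.mem_iInter, Set.mem_image,
      forall_exists_index, and_imp]
    constructor
    · intro ht a ha
      exact ht (a i) a ha rfl
    · rintro ht b a ha rfl
      exact ht a ha
end

section
/- The lattice L = [0,1] ∩ ℚ has a complete representation: for every irrational r ∈ (0,1), the set {a ∈ L : a > r} is a complete, completely prime filter, and these filters form a distinguishing set. -/
instance : Fact ((0:ℚ) ≤ 1) := ⟨zero_le_one⟩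

namespace Stmt18Aux

abbrev L' := ↥(Set.Icc (0:ℚ) 1)

lemma coe_inf' (a b : L') : ((a ⊓ b : L') : ℚ) = min (a:ℚ) (b:ℚ) := by
  rcases le_total a b with h|h
  · rw [inf_eq_left.mpr h, min_eq_left (Subtype.coe_le_coe.mpr h)]
  · rw [inf_eq_right.mpr h, min_eq_right (Subtype.coe_le_coe.mpr h)]

lemma coe_sup' (a b : L') : ((a ⊔ b : L') : ℚ) = max (a:ℚ) (b:ℚ) := by
  rcases le_total a b with h|h
  · rw [sup_eq_right.mpr h, max_eq_right (Subtype.coe_le_coe.mpr h)]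
  · rw [sup_eq_left.mpr h, max_eq_left (Subtype.coe_le_coe.mpr h)]

lemma glb_lt {r : ℝ} (hr : Irrational r) (hr1 : r < 1)
    {S : Set L'} {x : L'} (hx : IsGLB S x)
    (h : ∀ a ∈ S, r < ((a:ℚ):ℝ)) : r < ((x:ℚ):ℝ) := by
  by_contra hc
  push_neg at hc
  have hne : ((x:ℚ):ℝ) ≠ r := fun he => hr ⟨(x:ℚ), he⟩
  have hlt : ((x:ℚ):ℝ) < r := lt_of_le_of_ne hc hne
  obtain ⟨q, hq1, hq2⟩ := exists_rat_btwn hlt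
  have hx0 : (0:ℝ) ≤ ((x:ℚ):ℝ) := by exact_mod_cast x.2.1
  have hq0 : (0:ℚ) ≤ q := by exact_mod_cast (hx0.trans hq1.le)
  have hq1' : q ≤ 1 := by exact_mod_cast (hq2.le.trans hr1.le)
  have hlb : (⟨q, hq0, hq1'⟩ : L') ∈ lowerBounds S := by
    intro a ha
    have : (q:ℝ) ≤ ((a:ℚ):ℝ) := (hq2.trans (h a ha)).le
    exact Subtype.coe_le_coe.mp (by exact_mod_cast this)
  have hle : (q:ℝ) ≤ ((x:ℚ):ℝ) := by exact_mod_cast Subtype.coe_le_coe.mpr (hx.2 hlb)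
  exact absurd hq1 (not_lt.mpr hle)

lemma lub_gt {r : ℝ} (hr0 : 0 < r)
    {S : Set L'} {x : L'} (hx : IsLUB S x)
    (h : r < ((x:ℚ):ℝ)) : ∃ a ∈ S, r < ((a:ℚ):ℝ) := by
  by_contra hc
  push_neg at hc
  obtain ⟨q, hq1, hq2⟩ := exists_rat_btwn h
  have hx1 : ((x:ℚ):ℝ) ≤ 1 := by exact_mod_cast x.2.2
  have hq0 : (0:ℚ) ≤ q := by exact_mod_cast (hr0.trans hq1).le
  have hq1' : q ≤ 1 := by exact_mod_cast (hq2.le.trans hx1)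
  have hub : (⟨q, hq0, hq1'⟩ : L') ∈ upperBounds S := by
    intro a ha
    have : ((a:ℚ):ℝ) ≤ (q:ℝ) := (hc a ha).trans hq1.le
    exact Subtype.coe_le_coe.mp (by exact_mod_cast this)
  have hle : ((x:ℚ):ℝ) ≤ (q:ℝ) := by exact_mod_cast Subtype.coe_le_coe.mpr (hx.2 hub)
  exact absurd hq2 (not_lt.mpr hle)

end Stmt18Aux

open Stmt18Aux in
theorem stmt18 :
    (∀ r : ℝ, Irrational r → 0 < r → r < 1 →
        IsPrimeFilter {a : ↥(Set.Icc (0:ℚ) 1) | r < ((a : ℚ) : ℝ)} ∧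
        CompleteFilter {a : ↥(Set.Icc (0:ℚ) 1) | r < ((a : ℚ) : ℝ)} ∧
        CompletelyPrimeFilter {a : ↥(Set.Icc (0:ℚ) 1) | r < ((a : ℚ) : ℝ)}) ∧
    Distinguishing {F : Set ↥(Set.Icc (0:ℚ) 1) |
      ∃ r : ℝ, Irrational r ∧ 0 < r ∧ r < 1 ∧
        F = {a : ↥(Set.Icc (0:ℚ) 1) | r < ((a : ℚ) : ℝ)}} ∧
    ∃ (X : Type) (h : ↥(Set.Icc (0:ℚ) 1) → Set X),
      IsRep h ∧ MeetComplete h ∧ JoinComplete h := by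
  have hbot : ((⊥ : L') : ℚ) = 0 := rfl
  have htop : ((⊤ : L') : ℚ) = 1 := rfl
  refine ⟨?_, ?_, ?_⟩
  · intro r hr hr0 hr1
    refine ⟨⟨⟨?_, ?_, ?_⟩, ?_, ?_⟩, ?_, ?_⟩
    · show r < ((⊤ : L') : ℚ)
      rw [htop]; exact_mod_cast hr1
    · intro a b ha hab
      show r < ((b:ℚ):ℝ)
      exact lt_of_lt_of_le ha (by exact_mod_cast Subtype.coe_le_coe.mpr hab)
    · intro a b ha hb
      show r < (((a ⊓ b : L') : ℚ) : ℝ)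
      rw [coe_inf']
      push_cast
      exact lt_min ha hb
    · show ¬ r < (((⊥ : L') : ℚ) : ℝ)
      rw [hbot]
      push_cast
      exact not_lt.mpr hr0.le
    · intro a b hab
      have : r < (((a ⊔ b : L') : ℚ) : ℝ) := hab
      rw [coe_sup'] at this
      push_cast at this
      exact lt_max_iff.mp this
    · intro S hS x hx
      exact glb_lt hr hr1 hx (fun a ha => hS ha)
    · intro S x hx hxF
      exact lub_gt hr0 hx hxF
  · intro a b hab
    rcases hab.lt_or_gt with h | h
    · have h' : ((a:ℚ):ℝ) < ((b:ℚ):ℝ) := by exact_mod_cast Subtype.coe_lt_coe.mpr h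
      obtain ⟨r, hr, hra, hrb⟩ := exists_irrational_btwn h'
      have ha0 : (0:ℝ) ≤ ((a:ℚ):ℝ) := by exact_mod_cast a.2.1
      have hb1 : ((b:ℚ):ℝ) ≤ 1 := by exact_mod_cast b.2.2
      refine ⟨_, ⟨r, hr, ha0.trans_lt hra, hrb.trans_le hb1, rfl⟩, Or.inr ⟨hrb, not_lt.mpr hra.le⟩⟩
    · have h' : ((b:ℚ):ℝ) < ((a:ℚ):ℝ) := by exact_mod_cast Subtype.coe_lt_coe.mpr h
      obtain ⟨r, hr, hrb, hra⟩ := exists_irrational_btwn h'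
      have hb0 : (0:ℝ) ≤ ((b:ℚ):ℝ) := by exact_mod_cast b.2.1
      have ha1 : ((a:ℚ):ℝ) ≤ 1 := by exact_mod_cast a.2.2
      refine ⟨_, ⟨r, hr, hb0.trans_lt hrb, hra.trans_le ha1, rfl⟩, Or.inl ⟨hra, not_lt.mpr hrb.le⟩⟩
  · refine ⟨{p : ℝ // Irrational p ∧ 0 < p ∧ p < 1},
      fun a => {p | (p:ℝ) < ((a:ℚ):ℝ)}, ⟨?_, ?_, ?_, ?_, ?_⟩, ?_, ?_⟩
    · intro a b hab
      by_contra hne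
      have key : ∀ p : {p : ℝ // Irrational p ∧ 0 < p ∧ p < 1},
          ((p:ℝ) < ((a:ℚ):ℝ) ↔ (p:ℝ) < ((b:ℚ):ℝ)) := fun p => Set.ext_iff.mp hab p
      rcases lt_trichotomy ((a:ℚ):ℝ) ((b:ℚ):ℝ) with h | h | h
      · obtain ⟨r, hr, hra, hrb⟩ := exists_irrational_btwn h
        have ha0 : (0:ℝ) ≤ ((a:ℚ):ℝ) := by exact_mod_cast a.2.1
        have hb1 : ((b:ℚ):ℝ) ≤ 1 := by exact_mod_cast b.2.2
        exact absurd ((key ⟨r, hr, ha0.trans_lt hra, hrb.trans_le hb1⟩).mpr hrb)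
          (not_lt.mpr hra.le)
      · exact hne (Subtype.coe_injective (by exact_mod_cast h : (a:ℚ) = (b:ℚ)))
      · obtain ⟨r, hr, hrb, hra⟩ := exists_irrational_btwn h
        have hb0 : (0:ℝ) ≤ ((b:ℚ):ℝ) := by exact_mod_cast b.2.1
        have ha1 : ((a:ℚ):ℝ) ≤ 1 := by exact_mod_cast a.2.2
        exact absurd ((key ⟨r, hr, hb0.trans_lt hrb, hra.trans_le ha1⟩).mp hra)
          (not_lt.mpr hrb.le)
    · intro a b
      ext p
      show (p:ℝ) < (((a ⊓ b : L') : ℚ) : ℝ) ↔ _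
      rw [coe_inf']
      push_cast
      exact lt_min_iff
    · intro a b
      ext p
      show (p:ℝ) < (((a ⊔ b : L') : ℚ) : ℝ) ↔ _
      rw [coe_sup']
      push_cast
      exact lt_max_iff
    · ext p
      show (p:ℝ) < (((⊥ : L') : ℚ) : ℝ) ↔ _
      rw [hbot]
      push_cast
      simp [not_lt.mpr p.2.2.1.le]
    · ext p
      show (p:ℝ) < (((⊤ : L') : ℚ) : ℝ) ↔ _
      rw [htop]
      push_cast
      simp [p.2.2.2]
    · intro S x hx
      ext p
      simp only [Set.mem_iInter, Set.mem_setOf_eq]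
      constructor
      · intro hp a ha
        exact lt_of_lt_of_le hp (by exact_mod_cast Subtype.coe_le_coe.mpr (hx.1 ha))
      · intro hp
        exact glb_lt p.2.1 p.2.2.2 hx hp
    · intro S x hx
      ext p
      simp only [Set.mem_iUnion, Set.mem_setOf_eq]
      constructor
      · intro hp
        obtain ⟨a, ha, hpa⟩ := lub_gt p.2.2.1 hx hp
        exact ⟨a, ha, hpa⟩
      · rintro ⟨a, ha, hpa⟩
        exact lt_of_lt_of_le hpa (by exact_mod_cast Subtype.coe_le_coe.mpr (hx.1 ha))
end
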